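/- Let V ⊂ ℝ² consist of 7 points whose compressed Vandermonde matrix on the basis {1, x, y, x², xy, y², x²y} is invertible, and let q_7, q_9, q_{10} be cubic polynomials vanishing on V with leading monomials x³, xy², y³ respectively. Then every polynomial p of degree ≤ 6 vanishing identically on V can be written as p = A q_7 + B q_9 + C q_{10} with A, B, C polynomials of degree ≤ 3. -/
import Mathlib


open MvPolynomial

/-- The exponent Finsupp of the monomial `x^i y^j`. -/
noncomputable def mIdx (i j : ℕ) : Fin 2 →₀ ℕ := Finsupp.single 0 i + Finsupp.single 1 j

/-- The monomial `x^i y^j` as a bivariate real polynomial. -/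
noncomputable def mono (i j : ℕ) : MvPolynomial (Fin 2) ℝ := monomial (mIdx i j) 1

/-- Evaluation of a bivariate polynomial at a point of `ℝ²`. -/
noncomputable def evalAt (z : ℝ × ℝ) (p : MvPolynomial (Fin 2) ℝ) : ℝ := eval ![z.1, z.2] p

/-- Graded lexicographic order (with `x > y`) on exponent pairs. -/
def glexLt (a b : ℕ × ℕ) : Prop :=
  a.1 + a.2 < b.1 + b.2 ∨ (a.1 + a.2 = b.1 + b.2 ∧ a.1 < b.1)

/-- `q` has leading monomial `x^i y^j` (with coefficient 1) in graded lex order `x > y`. -/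
def HasLeading (q : MvPolynomial (Fin 2) ℝ) (i j : ℕ) : Prop :=
  q.coeff (mIdx i j) = 1 ∧ ∀ d ∈ q.support, d ≠ mIdx i j → glexLt (d 0, d 1) (i, j)

/-- The basis of monomials `{1, x, y, x², xy, y², x²y}`. -/
def bas7b : Fin 7 → ℕ × ℕ := ![(0,0),(1,0),(0,1),(2,0),(1,1),(0,2),(2,1)]

/-- The compressed Vandermonde matrix of seven points on the basis `bas7b`. -/
def W7b (pts : Fin 7 → ℝ × ℝ) : Matrix (Fin 7) (Fin 7) ℝ :=
  Matrix.of fun k m => (pts k).1 ^ (bas7b m).1 * (pts k).2 ^ (bas7b m).2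

open Matrix

@[simp] lemma mIdx0 (i j : ℕ) : (mIdx i j) 0 = i := by simp [mIdx]
@[simp] lemma mIdx1 (i j : ℕ) : (mIdx i j) 1 = j := by simp [mIdx]
lemma eq_mIdx (d : Fin 2 →₀ ℕ) : d = mIdx (d 0) (d 1) := by
  ext a; fin_cases a <;> simp [mIdx]

lemma fsum (f : Fin 2 →₀ ℕ) : (f.sum fun _ e => e) = f 0 + f 1 := by
  rw [Finsupp.sum_fintype] <;> simp [Fin.sum_univ_two]

def Div3 (d : Fin 2 →₀ ℕ) : Prop := 3 ≤ d 0 ∨ (1 ≤ d 0 ∧ 2 ≤ d 1) ∨ 3 ≤ d 1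

noncomputable def mB : Fin 7 → (Fin 2 →₀ ℕ) := fun m => mIdx (bas7b m).1 (bas7b m).2

lemma mB_inj : Function.Injective mB := by
  intro a b hab
  have h0 : (bas7b a).1 = (bas7b b).1 := by
    simpa [mB] using congrArg (fun f => f 0) hab
  have h1 : (bas7b a).2 = (bas7b b).2 := by
    simpa [mB] using congrArg (fun f => f 1) hab
  have h : bas7b a = bas7b b := Prod.ext h0 h1
  revert h
  have : ∀ a b : Fin 7, bas7b a = bas7b b → a = b := by decide
  exact this a b

lemma mem_range_mB (d : Fin 2 →₀ ℕ) (h : ¬ Div3 d) : ∃ m, d = mB m := by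
  have hde := eq_mIdx d
  have key : ∀ m : Fin 7, bas7b m = (d 0, d 1) → ∃ m', d = mB m' := by
    intro m hm
    refine ⟨m, ?_⟩
    rw [mB, hm]; exact hde
  unfold Div3 at h
  have h0 : d 0 ≤ 2 := by omega
  have h1 : d 1 ≤ 2 := by omega
  set i := d 0 with hi
  set j := d 1 with hj
  interval_cases i <;> interval_cases j <;>
    first
      | exact key 0 (by decide)
      | exact key 1 (by decide)
      | exact key 2 (by decide)
      | exact key 3 (by decide)
      | exact key 4 (by decide)
      | exact key 5 (by decide)
      | exact key 6 (by decide)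
      | omega

lemma vanish_zero (pts : Fin 7 → ℝ × ℝ) (hW : IsUnit (W7b pts).det)
    (p : MvPolynomial (Fin 2) ℝ) (hs : ∀ d ∈ p.support, ¬ Div3 d)
    (hv : ∀ k, evalAt (pts k) p = 0) : p = 0 := by
  classical
  set v : Fin 7 → ℝ := fun m => p.coeff (mB m) with hv0
  have hsub : p.support ⊆ Finset.univ.image mB := by
    intro d hd
    obtain ⟨m, rfl⟩ := mem_range_mB d (hs d hd)
    exact Finset.mem_image.mpr ⟨m, Finset.mem_univ m, rfl⟩
  have hWv : W7b pts *ᵥ v = 0 := by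
    funext k
    have h1 : (W7b pts *ᵥ v) k
        = ∑ m : Fin 7, p.coeff (mB m) * ((pts k).1 ^ (mB m) 0 * (pts k).2 ^ (mB m) 1) := by
      unfold Matrix.mulVec dotProduct W7b
      refine Finset.sum_congr rfl fun m _ => ?_
      simp [mB, hv0]; ring
    have h2 : ∑ m : Fin 7, p.coeff (mB m) * ((pts k).1 ^ (mB m) 0 * (pts k).2 ^ (mB m) 1)
        = ∑ d ∈ Finset.univ.image mB, p.coeff d * ((pts k).1 ^ d 0 * (pts k).2 ^ d 1) :=
      (Finset.sum_image (f := fun d => p.coeff d * ((pts k).1 ^ d 0 * (pts k).2 ^ d 1))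
        (fun a _ b _ h => mB_inj h)).symm
    have h3 : ∑ d ∈ Finset.univ.image mB, p.coeff d * ((pts k).1 ^ d 0 * (pts k).2 ^ d 1)
        = ∑ d ∈ p.support, p.coeff d * ((pts k).1 ^ d 0 * (pts k).2 ^ d 1) :=
      (Finset.sum_subset hsub (fun d _ hd => by
        rw [MvPolynomial.notMem_support_iff.mp hd]; ring)).symm
    have h4 : ∑ d ∈ p.support, p.coeff d * ((pts k).1 ^ d 0 * (pts k).2 ^ d 1)
        = evalAt (pts k) p := by
      rw [evalAt, eval_eq']
      refine Finset.sum_congr rfl fun d _ => ?_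
      rw [Fin.prod_univ_two]
      simp
    rw [h1, h2, h3, h4, hv k]
    rfl
  have hvz : v = 0 := by
    calc v = ((W7b pts)⁻¹ * W7b pts) *ᵥ v := by
            rw [Matrix.nonsing_inv_mul _ hW, Matrix.one_mulVec]
    _ = (W7b pts)⁻¹ *ᵥ (W7b pts *ᵥ v) := by rw [Matrix.mulVec_mulVec]
    _ = 0 := by rw [hWv, Matrix.mulVec_zero]
  by_contra hp
  obtain ⟨d, hd⟩ := MvPolynomial.support_nonempty.mpr hp
  obtain ⟨m, rfl⟩ := mem_range_mB d (hs d hd)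
  have : p.coeff (mB m) ≠ 0 := MvPolynomial.mem_support_iff.mp hd
  exact this (congrFun hvz m)

def nval (d : Fin 2 →₀ ℕ) : ℕ := 7 * (d 0 + d 1) + d 0

lemma step (pts : Fin 7 → ℝ × ℝ) (q : MvPolynomial (Fin 2) ℝ) (a b : ℕ) (hab : a + b = 3)
    (hdq : q.totalDegree ≤ 3) (hlq : HasLeading q a b) (hvq : ∀ k, evalAt (pts k) q = 0)
    (p : MvPolynomial (Fin 2) ℝ) (hp6 : p.totalDegree ≤ 6) (hpv : ∀ k, evalAt (pts k) p = 0)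
    (d : Fin 2 →₀ ℕ) (hds : d ∈ p.support) (ha : a ≤ d 0) (hb : b ≤ d 1) :
    ∃ (u : Fin 2 →₀ ℕ) (c : ℝ) (p' : MvPolynomial (Fin 2) ℝ),
      p = p' + monomial u c * q ∧
      (monomial u c : MvPolynomial (Fin 2) ℝ).totalDegree ≤ 3 ∧
      p'.totalDegree ≤ 6 ∧ (∀ k, evalAt (pts k) p' = 0) ∧
      (∀ d' ∈ p'.support, (d' ∈ p.support ∧ d' ≠ d) ∨ nval d' < nval d) := by
  classical
  set u : Fin 2 →₀ ℕ := mIdx (d 0 - a) (d 1 - b) with hu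
  set c : ℝ := p.coeff d with hc
  set p' : MvPolynomial (Fin 2) ℝ := p - monomial u c * q with hp'
  have hd6 : d 0 + d 1 ≤ 6 := by
    have := MvPolynomial.le_totalDegree hds
    rw [fsum] at this; omega
  have hule : u ≤ d := by
    intro i
    fin_cases i <;> simp [hu] <;> omega
  have hdu : d - u = mIdx a b := by
    ext i
    fin_cases i <;> simp [hu, Finsupp.tsub_apply] <;> omega
  have hcoeffprod : ∀ d' : Fin 2 →₀ ℕ,
      (monomial u c * q).coeff d' = if u ≤ d' then c * q.coeff (d' - u) else 0 := fun d' =>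
    MvPolynomial.coeff_monomial_mul' d' u c q
  have hcd : p'.coeff d = 0 := by
    rw [hp', MvPolynomial.coeff_sub, hcoeffprod, if_pos hule, hdu, hlq.1]
    simp [hc]
  have hmon3 : (monomial u c : MvPolynomial (Fin 2) ℝ).totalDegree ≤ 3 := by
    have hb1 : (monomial u c : MvPolynomial (Fin 2) ℝ).totalDegree ≤ u.sum fun _ e => e :=
      MvPolynomial.totalDegree_monomial_le _ _
    rw [fsum] at hb1
    refine hb1.trans ?_
    simp only [hu, mIdx0, mIdx1]
    omega
  refine ⟨u, c, p', by rw [hp']; ring, hmon3, ?_, ?_, ?_⟩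
  · refine le_trans (MvPolynomial.totalDegree_sub p _) (max_le hp6 ?_)
    refine le_trans (MvPolynomial.totalDegree_mul _ _) ?_
    omega
  · intro k
    have h1 := hvq k
    have h2 := hpv k
    rw [evalAt] at *
    rw [hp', map_sub, _root_.map_mul, h1, h2]
    ring
  · intro d' hd'
    by_cases hmem : d' ∈ p.support
    · left
      refine ⟨hmem, ?_⟩
      rintro rfl
      exact MvPolynomial.mem_support_iff.mp hd' hcd
    · right
      have hco : p'.coeff d' ≠ 0 := MvPolynomial.mem_support_iff.mp hd'
      have hcp : p.coeff d' = 0 := MvPolynomial.notMem_support_iff.mp hmem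
      have hprod : (monomial u c * q).coeff d' ≠ 0 := by
        intro h0
        rw [hp', MvPolynomial.coeff_sub, hcp, h0] at hco
        simp at hco
      rw [hcoeffprod] at hprod
      by_cases hud : u ≤ d'
      · rw [if_pos hud] at hprod
        set f : Fin 2 →₀ ℕ := d' - u with hf
        have hfs : f ∈ q.support := by
          rw [MvPolynomial.mem_support_iff]
          intro h0; rw [hf, h0] at hprod; simp at hprod
        have hfd : d' = u + f := by rw [hf, add_comm]; exact (tsub_add_cancel_of_le hud).symm
        have hne : d' ≠ d := fun h => hmem (h ▸ hds)
        have hfne : f ≠ mIdx a b := by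
          intro h0
          apply hne
          have : d' = u + mIdx a b := h0 ▸ hfd
          rw [this]
          ext i
          fin_cases i <;> simp [hu, Finsupp.add_apply] <;> omega
        have hglex := hlq.2 f hfs hfne
        have hfsum : f 0 + f 1 ≤ 3 := by
          have := MvPolynomial.le_totalDegree hfs
          rw [fsum] at this; omega
        have hd'0 : d' 0 = u 0 + f 0 := by rw [hfd]; simp [Finsupp.add_apply]
        have hd'1 : d' 1 = u 1 + f 1 := by rw [hfd]; simp [Finsupp.add_apply]
        have hu0 : u 0 = d 0 - a := by simp [hu]
        have hu1 : u 1 = d 1 - b := by simp [hu]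
        rcases hglex with h | ⟨h1, h2⟩ <;>
          · simp only [nval]
            omega
      · rw [if_neg hud] at hprod
        exact absurd rfl hprod

lemma nval_lt_of_le_ne {d' d : Fin 2 →₀ ℕ} (h6 : d' 0 + d' 1 ≤ 6) (h6' : d 0 + d 1 ≤ 6)
    (hle : nval d' ≤ nval d) (hne : d' ≠ d) : nval d' < nval d := by
  rcases lt_or_eq_of_le hle with h | h
  · exact h
  · exfalso
    apply hne
    unfold nval at h
    have h0 : d' 0 = d 0 := by omega
    have h1 : d' 1 = d 1 := by omega
    rw [eq_mIdx d', h0, h1, ← eq_mIdx d]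

lemma key (pts : Fin 7 → ℝ × ℝ) (hW : IsUnit (W7b pts).det)
    (q7 q9 q10 : MvPolynomial (Fin 2) ℝ)
    (hd7 : q7.totalDegree ≤ 3) (hl7 : HasLeading q7 3 0) (hv7 : ∀ k, evalAt (pts k) q7 = 0)
    (hd9 : q9.totalDegree ≤ 3) (hl9 : HasLeading q9 1 2) (hv9 : ∀ k, evalAt (pts k) q9 = 0)
    (hd10 : q10.totalDegree ≤ 3) (hl10 : HasLeading q10 0 3)
    (hv10 : ∀ k, evalAt (pts k) q10 = 0) :
    ∀ N : ℕ, ∀ p : MvPolynomial (Fin 2) ℝ, p.totalDegree ≤ 6 →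
      (∀ k, evalAt (pts k) p = 0) →
      (∀ d ∈ p.support, Div3 d → nval d < N) →
      ∃ A B C : MvPolynomial (Fin 2) ℝ,
        A.totalDegree ≤ 3 ∧ B.totalDegree ≤ 3 ∧ C.totalDegree ≤ 3 ∧
        p = A * q7 + B * q9 + C * q10 := by
  classical
  intro N
  induction N using Nat.strong_induction_on with
  | _ N IH =>
    intro p hp6 hpv hpN
    by_cases hS : ∀ d ∈ p.support, ¬ Div3 d
    · exact ⟨0, 0, 0, by simp, by simp, by simp,
        by rw [vanish_zero pts hW p hS hpv]; ring⟩
    push_neg at hS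
    obtain ⟨d0, hd0s, hd0d⟩ := hS
    obtain ⟨d, hdf, hmax⟩ := Finset.exists_max_image (p.support.filter Div3) nval
      ⟨d0, Finset.mem_filter.mpr ⟨hd0s, hd0d⟩⟩
    obtain ⟨hds, hdd⟩ := Finset.mem_filter.mp hdf
    have hd6 : d 0 + d 1 ≤ 6 := by
      have := MvPolynomial.le_totalDegree hds
      rw [fsum] at this; omega
    have hNd : nval d < N := hpN d hds hdd
    -- generic continuation
    have cont : ∀ q : MvPolynomial (Fin 2) ℝ, ∀ a b : ℕ, a + b = 3 →
        q.totalDegree ≤ 3 → HasLeading q a b → (∀ k, evalAt (pts k) q = 0) →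
        a ≤ d 0 → b ≤ d 1 →
        ∃ (M : MvPolynomial (Fin 2) ℝ) (p' : MvPolynomial (Fin 2) ℝ),
          p = p' + M * q ∧ M.totalDegree ≤ 3 ∧
          ∃ A B C : MvPolynomial (Fin 2) ℝ,
            A.totalDegree ≤ 3 ∧ B.totalDegree ≤ 3 ∧ C.totalDegree ≤ 3 ∧
            p' = A * q7 + B * q9 + C * q10 := by
      intro q a b hab hdq hlq hvq ha hb
      obtain ⟨u, c, p', heq, hmu, hp'6, hp'v, hsupp'⟩ :=
        step pts q a b hab hdq hlq hvq p hp6 hpv d hds ha hb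
      refine ⟨monomial u c, p', heq, hmu, ?_⟩
      refine IH (nval d) hNd p' hp'6 hp'v ?_
      intro d' hd's hd'd
      rcases hsupp' d' hd's with ⟨hmem, hne⟩ | hlt
      · have hle : nval d' ≤ nval d := hmax d' (Finset.mem_filter.mpr ⟨hmem, hd'd⟩)
        have h6' : d' 0 + d' 1 ≤ 6 := by
          have := MvPolynomial.le_totalDegree hmem
          rw [fsum] at this; omega
        exact nval_lt_of_le_ne h6' hd6 hle hne
      · exact hlt
    rcases hdd with h7 | ⟨h9a, h9b⟩ | h10
    · obtain ⟨M, p', heq, hM, A, B, C, hA, hB, hC, hrep⟩ :=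
        cont q7 3 0 rfl hd7 hl7 hv7 h7 (Nat.zero_le _)
      exact ⟨A + M, B, C, le_trans (MvPolynomial.totalDegree_add _ _) (max_le hA hM),
        hB, hC, by rw [heq, hrep]; ring⟩
    · obtain ⟨M, p', heq, hM, A, B, C, hA, hB, hC, hrep⟩ :=
        cont q9 1 2 rfl hd9 hl9 hv9 h9a h9b
      exact ⟨A, B + M, C, hA, le_trans (MvPolynomial.totalDegree_add _ _) (max_le hB hM),
        hC, by rw [heq, hrep]; ring⟩
    · obtain ⟨M, p', heq, hM, A, B, C, hA, hB, hC, hrep⟩ :=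
        cont q10 0 3 rfl hd10 hl10 hv10 (Nat.zero_le _) h10
      exact ⟨A, B, C + M, hA, hB, le_trans (MvPolynomial.totalDegree_add _ _) (max_le hC hM),
        by rw [heq, hrep]; ring⟩


/-- every polynomial of degree ≤ 6 vanishing on the seven points can be
written as `A q₇ + B q₉ + C q₁₀` with `A, B, C` of degree ≤ 3. -/
theorem representation_rank7_case2 (pts : Fin 7 → ℝ × ℝ)
    (hW : IsUnit (W7b pts).det)
    (q7 q9 q10 : MvPolynomial (Fin 2) ℝ)
    (hd7 : q7.totalDegree ≤ 3) (hl7 : HasLeading q7 3 0) (hv7 : ∀ k, evalAt (pts k) q7 = 0)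
    (hd9 : q9.totalDegree ≤ 3) (hl9 : HasLeading q9 1 2) (hv9 : ∀ k, evalAt (pts k) q9 = 0)
    (hd10 : q10.totalDegree ≤ 3) (hl10 : HasLeading q10 0 3)
    (hv10 : ∀ k, evalAt (pts k) q10 = 0) :
    ∀ p : MvPolynomial (Fin 2) ℝ, p.totalDegree ≤ 6 → (∀ k, evalAt (pts k) p = 0) →
      ∃ A B C : MvPolynomial (Fin 2) ℝ,
        A.totalDegree ≤ 3 ∧ B.totalDegree ≤ 3 ∧ C.totalDegree ≤ 3 ∧
        p = A * q7 + B * q9 + C * q10 := by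
  intro p hp6 hpv
  refine key pts hW q7 q9 q10 hd7 hl7 hv7 hd9 hl9 hv9 hd10 hl10 hv10 49 p hp6 hpv ?_
  intro d hd _
  have := MvPolynomial.le_totalDegree hd
  rw [fsum] at this
  unfold nval
  omega
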